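/- arXiv:1607.07821 — 4 statements merged into one kernel-verified Lean document; each statement's English description precedes it below -/
import Mathlib

section
/- For integers l ≥ 2, j ≥ 2, and p ≥ 0 with (j,p) ≠ (2,0), the quantity binom(l+j-1, j)·(j/l + p) is at least min{binom(l+1,2)·(2/l + 1), binom(l+2,3)·(3/l)} = (l+1)(l+2)/2, i.e. binom(l+j-1, j)·(j/l + p) ≥ (l+1)(l+2)/2. -/
lemma choose_aux (l k : ℕ) : (l+2).choose 3 * 3 ≤ (l+k+2).choose (k+3) * (k+3) := by
  induction k with
  | zero => simp
  | succ k ih =>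
    have h1 : (l+k+3) * ((l+k+2).choose (k+3)) = (l+k+3).choose (k+4) * (k+4) :=
      Nat.add_one_mul_choose_eq (l+k+2) (k+3)
    have h2 : (l+k+2).choose (k+3) * (k+3) ≤ (l+k+3) * ((l+k+2).choose (k+3)) := by
      rw [mul_comm]
      exact Nat.mul_le_mul_right _ (by omega)
    calc (l+2).choose 3 * 3 ≤ (l+k+2).choose (k+3) * (k+3) := ih
      _ ≤ (l+k+3) * ((l+k+2).choose (k+3)) := h2
      _ = (l+k+3).choose (k+4) * (k+4) := h1
      _ = (l+(k+1)+2).choose ((k+1)+3) * ((k+1)+3) := by ring_nf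

lemma c2_eq (l : ℕ) : ((l+1).choose 2 : ℚ) = l*(l+1)/2 := by
  have : (l+1).choose 2 * 2 = (l+1) * l := by
    have h1 : (l+1).choose 2 * 2 = (l+1) * l.choose 1 := (Nat.add_one_mul_choose_eq l 1).symm
    simpa using h1
  have := congrArg (Nat.cast : ℕ → ℚ) this
  push_cast at this
  linarith

lemma c3_eq (l : ℕ) : ((l+2).choose 3 : ℚ) = l*(l+1)*(l+2)/6 := by
  have h1 : (l+2).choose 3 * 3 = (l+2) * (l+1).choose 2 := (Nat.add_one_mul_choose_eq (l+1) 2).symm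
  have h2 := congrArg (Nat.cast : ℕ → ℚ) h1
  push_cast at h2
  rw [c2_eq] at h2
  linarith

/-- Chern class estimate for `Sym^j Q(p)`: for integers `l ≥ 2`, `j ≥ 2`, `p ≥ 0` with
`(j, p) ≠ (2, 0)`, one has
`binom(l+j-1, j)·(j/l + p) ≥ min{binom(l+1,2)·(2/l + 1), binom(l+2,3)·(3/l)} = (l+1)(l+2)/2`. -/
theorem chern_estimate_sym (l j p : ℕ) (hl : 2 ≤ l) (hj : 2 ≤ j) (h : ¬(j = 2 ∧ p = 0)) :
    min (((l + 1).choose 2 : ℚ) * (2 / l + 1)) (((l + 2).choose 3 : ℚ) * (3 / l))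
        = (l + 1) * (l + 2) / 2 ∧
      ((l + 1 : ℚ) * (l + 2)) / 2 ≤ ((l + j - 1).choose j : ℚ) * (j / l + p) := by
  have hl0 : 0 < l := by omega
  have hL : (0:ℚ) < l := by exact_mod_cast hl0
  have hA : ((l + 1).choose 2 : ℚ) * (2 / l + 1) = (l + 1) * (l + 2) / 2 := by
    rw [c2_eq]; field_simp; ring
  have hB : ((l + 2).choose 3 : ℚ) * (3 / l) = (l + 1) * (l + 2) / 2 := by
    rw [c3_eq]; field_simp; ring
  refine ⟨by rw [hA, hB, min_self], ?_⟩
  rcases eq_or_lt_of_le hj with hj2 | hj3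
  · -- j = 2, so p ≥ 1
    subst hj2
    have hp : 1 ≤ p := by omega
    have hp' : (1:ℚ) ≤ p := by exact_mod_cast hp
    have : l + 2 - 1 = l + 1 := by omega
    rw [this, c2_eq]
    rw [div_le_iff₀ (by norm_num : (0:ℚ) < 2)] at *
    have h2 : (2:ℚ)/l + 1 ≤ 2/l + p := by linarith
    have h3 : (l:ℚ)*(l+1)/2 * (2/l + 1) = (l+1)*(l+2)/2 := by field_simp; ring
    nlinarith [mul_le_mul_of_nonneg_left h2 (by positivity : (0:ℚ) ≤ (l:ℚ)*(l+1)/2)]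
  · -- j ≥ 3
    obtain ⟨k, rfl⟩ : ∃ k, j = k + 3 := ⟨j - 3, by omega⟩
    have heq : l + (k + 3) - 1 = l + k + 2 := by omega
    rw [heq]
    have key := choose_aux l k
    have keyQ : (l*(l+1)*(l+2)/6 : ℚ) * 3 ≤ ((l+k+2).choose (k+3) : ℚ) * (k+3) := by
      have hc := (Nat.cast_le (α := ℚ)).mpr key
      push_cast at hc
      rw [← c3_eq]
      push_cast
      linarith [hc]
    have hchoose : (0:ℚ) ≤ ((l+k+2).choose (k+3) : ℚ) := by positivity
    have hp0 : (0:ℚ) ≤ p := by positivity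
    have step : ((l+k+2).choose (k+3) : ℚ) * (((k+3):ℚ)/l) ≤
        ((l+k+2).choose (k+3) : ℚ) * (((k+3):ℚ)/l + p) := by nlinarith
    have step2 : (l+1:ℚ)*(l+2)/2 ≤ ((l+k+2).choose (k+3) : ℚ) * (((k+3):ℚ)/l) := by
      rw [mul_div_assoc'] at *
      rw [le_div_iff₀ hL]
      nlinarith
    push_cast
    push_cast at step step2
    linarith
end

section
/- Let W be a complex vector space, k ≥ 1, E a globally generated homogeneous vector bundle on G(k, W), and K = ker(H⁰(E) ⊗ O → E). Let s̄ ∈ H⁰(E) ⊗ (∧^k W)* be a general element, s ∈ H⁰(E(1)) its image under multiplication, Z ⊂ G(k,W) the zero locus of s, Σ ⊂ ℙ(H⁰(E) ⊕ ∧^k W) the image of ℙ_{G(k,W)}(K ⊕ O(-1)), and P_{s̄} the linear subspace {[(s̄(p), p)] : p ∈ ∧^k W}. Then Z ⊂ ℙ(∧^k W) (via the Plücker embedding) and Z' = Σ ∩ P_{s̄} ⊂ P_{s̄} are projectively equivalent. -/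
open LinearAlgebra.Projectivization
open scoped LinearAlgebra.Projectivization

/-!
A point `[p]` is sent by the graph `p ↦ (s̄ p, p)` to `[(s̄ p, p)]`, which lies on `Σ` (take
`v = s̄ p`, `t = 1`) whenever `[p] ∈ Z`. Conversely, if `[(s̄ p, p)] = [(v, t • q)]`
is a point of `Σ`, then `(s̄ p, p) = c • (v, t • q)`, so `[p] = [q] ∈ G` and
`s̄ p = c • v ∈ K_{[q]}`. Injectivity is that of any map induced by an injective linear map.
-/

namespace Projectivization

variable {𝕜 V W : Type*} [DivisionRing 𝕜] [AddCommGroup V] [Module 𝕜 V]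
  [AddCommGroup W] [Module 𝕜 W]

theorem eq_mk_of_rep_eq_smul {x : ℙ 𝕜 V} {p : V} (hp : p ≠ 0) {a : 𝕜} (h : x.rep = a • p) :
    x = mk 𝕜 p hp := by
  rw [← mk_rep x, mk_eq_mk_iff']
  exact ⟨a, h.symm⟩

theorem map_eq_mk_rep (f : V →ₗ[𝕜] W) (hf : Function.Injective f) (x : ℙ 𝕜 V) :
    map f hf x = mk 𝕜 (f x.rep) (map_zero f ▸ hf.ne x.rep_nonzero) := by
  conv_lhs => rw [← mk_rep x]
  rfl

theorem exists_smul_eq_of_map_eq_mk (f : V →ₗ[𝕜] W) (hf : Function.Injective f) {x : ℙ 𝕜 V}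
    {w : W} (hw : w ≠ 0) (h : map f hf x = mk 𝕜 w hw) : ∃ a : 𝕜, a • w = f x.rep := by
  rwa [map_eq_mk_rep, mk_eq_mk_iff'] at h

/-- The zero locus `Z`: the section of `E(1)` induced by `s̄` vanishes at `[p] ∈ G` iff
`s̄ p ∈ K_{[p]}`. -/
def zeroLocus (G : Set (ℙ 𝕜 V)) (K : ℙ 𝕜 V → Submodule 𝕜 W) (s : V →ₗ[𝕜] W) : Set (ℙ 𝕜 V) :=
  {x | x ∈ G ∧ s x.rep ∈ K x}

/-- The image `Σ ⊆ ℙ(W × V)` of the projective bundle `ℙ_G(K ⊕ O(-1))`. -/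
def projBundleImage (G : Set (ℙ 𝕜 V)) (K : ℙ 𝕜 V → Submodule 𝕜 W) : Set (ℙ 𝕜 (W × V)) :=
  {y | ∃ (v : W) (t : 𝕜) (p : V) (hp : p ≠ 0) (h : (v, t • p) ≠ 0),
    mk 𝕜 p hp ∈ G ∧ v ∈ K (mk 𝕜 p hp) ∧ y = mk 𝕜 (v, t • p) h}

variable {G : Set (ℙ 𝕜 V)} {K : ℙ 𝕜 V → Submodule 𝕜 W} {s : V →ₗ[𝕜] W}

theorem map_graph_mem_projBundleImage (hs : Function.Injective (s.prod LinearMap.id))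
    {x : ℙ 𝕜 V} (hx : x ∈ zeroLocus G K s) :
    map (s.prod LinearMap.id) hs x ∈ projBundleImage G K := by
  have h : (s x.rep, (1 : 𝕜) • x.rep) ≠ 0 := fun h0 ↦ x.rep_nonzero (by simpa using congrArg Prod.snd h0)
  refine ⟨s x.rep, 1, x.rep, x.rep_nonzero, h, ?_, ?_, ?_⟩
  · simpa only [mk_rep] using hx.1
  · simpa only [mk_rep] using hx.2
  · simp only [map_eq_mk_rep, one_smul]
    rfl

theorem mem_zeroLocus_of_map_graph_mem (hs : Function.Injective (s.prod LinearMap.id))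
    {x : ℙ 𝕜 V} (hx : map (s.prod LinearMap.id) hs x ∈ projBundleImage G K) :
    x ∈ zeroLocus G K s := by
  obtain ⟨v, t, p, hp, h, hpG, hvK, hy⟩ := hx
  obtain ⟨c, hc⟩ := exists_smul_eq_of_map_eq_mk _ hs h hy
  have hsx : s x.rep = c • v := (congrArg Prod.fst hc).symm
  have hxp : x = mk 𝕜 p hp := eq_mk_of_rep_eq_smul hp (a := c * t) <| by
    rw [mul_smul]
    exact (congrArg Prod.snd hc).symm
  subst hxp
  exact ⟨hpG, hsx ▸ (K _).smul_mem c hvK⟩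

end Projectivization

/-- `A = ∧^k W`, `G = G(k, W) ⊆ ℙ(A)`, `V₀ = H⁰(E)`, `K x = ker(H⁰(E) → E_x)`, `sbar` is `s̄`,
and `P_{s̄}` is the image of the graph embedding `p ↦ (s̄ p, p)`. -/
theorem zero_locus_projectively_equivalent_linear_section
    (A V₀ : Type*) [AddCommGroup A] [Module ℂ A] [AddCommGroup V₀] [Module ℂ V₀]
    (G : Set (ℙ ℂ A)) (K : ℙ ℂ A → Submodule ℂ V₀) (sbar : A →ₗ[ℂ] V₀)
    (hinj : Function.Injective (sbar.prod (LinearMap.id : A →ₗ[ℂ] A))) :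
    Set.BijOn (Projectivization.map (sbar.prod LinearMap.id) hinj)
      {x : ℙ ℂ A | x ∈ G ∧ sbar x.rep ∈ K x}
      ({y : ℙ ℂ (V₀ × A) |
          ∃ (v : V₀) (t : ℂ) (p : A) (hp : p ≠ 0) (h : (v, t • p) ≠ 0),
            Projectivization.mk ℂ p hp ∈ G ∧ v ∈ K (Projectivization.mk ℂ p hp) ∧
            y = Projectivization.mk ℂ (v, t • p) h}
        ∩ Set.range (Projectivization.map (sbar.prod LinearMap.id) hinj)) := by
  refine ⟨fun x hx ↦ ⟨Projectivization.map_graph_mem_projBundleImage hinj hx, x, rfl⟩,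
    (Projectivization.map_injective _ hinj).injOn, ?_⟩
  rintro _ ⟨hy, x, rfl⟩
  exact ⟨x, Projectivization.mem_zeroLocus_of_map_graph_mem hinj hy, rfl⟩
end

section
/- Let W be a 5-dimensional complex vector space, Q the rank-3 universal quotient bundle on G(2, W), and K = ker(∧²W ⊗ O → ∧²Q). Let Σ ⊂ ℙ(∧²W ⊕ ∧²W) be the image of ℙ_{G(2,W)}(K ⊕ O(-1)) under the tautological map. Then Σ coincides, as a reduced subset, with {[q, p] ∈ ℙ(∧²W ⊕ ∧²W) : p ∧ p = 0 and q ∧ p = 0 in ∧⁴W}. -/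
/-!
A nonzero `p ∈ ⋀²W` with `p ∧ p = 0` is decomposable: pick `d ∈ W*` with `v := d ⌋ p ≠ 0`;
contracting `p ∧ p = 0` with `d` gives `2 v ∧ p = 0`, and a 2-vector annihilated by `v ∧ ·` has
the form `v ∧ y`. This accounts for the points `[q, p]` with `p ≠ 0` (take `t = 1`). A point
`[q, 0]` lies on `Σ` (take `t = 0`) once some nonzero decomposable `p` satisfies `q ∧ p = 0`:
the map `d ↦ d ⌋ q` from `W*` to `W` is skew, hence singular because `dim W = 5` is odd, so `q`
lies in `⋀²H` for a hyperplane `H`, and in a basis of `H` such a `p` can be written down.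
-/

open ExteriorAlgebra LinearAlgebra.Projectivization
open scoped LinearAlgebra.Projectivization

section Dual

open Module

variable {K V : Type*} [Field K] [AddCommGroup V] [Module K V]

theorem LinearMap.exists_ne_zero_apply_eq_zero_of_skew [NeZero (2 : K)] [FiniteDimensional K V]
    (hV : Odd (finrank K V)) (φ : Dual K V →ₗ[K] V)
    (hφ : ∀ d d' : Dual K V, d' (φ d) = -d (φ d')) :
    ∃ d ≠ 0, φ d = 0 := by
  classical
  let e := finBasis K V
  let A := LinearMap.toMatrix e.dualBasis e φ
  have hA : A.transpose = -A := by
    ext i j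
    simpa [A, LinearMap.toMatrix_apply] using hφ (e.coord i) (e.coord j)
  have hdet : (2 : K) * A.det = 0 := by
    have := congrArg Matrix.det hA
    rw [Matrix.det_transpose, Matrix.det_neg, Fintype.card_fin, hV.neg_one_pow] at this
    linear_combination this
  obtain ⟨v, hv0, hv⟩ := Matrix.exists_mulVec_eq_zero_iff.mpr
    ((mul_eq_zero.mp hdet).resolve_left two_ne_zero)
  have hrepr : ⇑(e.dualBasis.repr (e.dualBasis.equivFun.symm v)) = v :=
    e.dualBasis.equivFun.apply_symm_apply v
  refine ⟨e.dualBasis.equivFun.symm v, e.dualBasis.equivFun.symm.map_ne_zero_iff.mpr hv0,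
    e.equivFun.injective ?_⟩
  rw [Basis.equivFun_apply, ← LinearMap.toMatrix_mulVec_repr e.dualBasis, hrepr, hv, map_zero]

theorem Module.Basis.exists_coord_zero_eq [FiniteDimensional K V] {n : ℕ}
    (hV : finrank K V = n + 1) {d : Dual K V} (hd : d ≠ 0) :
    ∃ f : Basis (Fin (n + 1)) K V, f.coord 0 = d := by
  obtain ⟨u, hu⟩ := LinearMap.surjective hd 1
  have hker : finrank K (LinearMap.ker d) = n := by
    have := Dual.finrank_ker_add_one_of_ne_zero hd
    omega
  let f := Basis.mkFinCons u (finBasisOfFinrankEq K _ hker)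
    (fun c x hx hcx => by simpa [hu, LinearMap.mem_ker.mp hx] using congrArg d hcx)
    (fun z => ⟨-d z, by simp [hu]⟩)
  refine ⟨f, f.ext fun i => ?_⟩
  rw [Basis.coord_apply, Basis.repr_self]
  refine Fin.cases ?_ (fun i => ?_) i
  · simp [f, Basis.coe_mkFinCons, hu]
  · simp [f, Basis.coe_mkFinCons, Fin.succ_ne_zero]

end Dual

namespace ExteriorAlgebra

section CommRing

variable {R M : Type*} [CommRing R] [AddCommGroup M] [Module R M]

local infixl:70 " ⌋ " => CliffordAlgebra.contractLeft (Q := (0 : QuadraticForm R M))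

theorem ι_mul_ι_comm (x y : M) : ι R x * ι R y = -(ι R y * ι R x) :=
  eq_neg_of_add_eq_zero_left (ι_add_mul_swap x y)

theorem ι_mul_ι_mem (x y : M) : ι R x * ι R y ∈ ⋀[R]^2 M := by
  change _ ∈ LinearMap.range (ι R : M →ₗ[R] _) ^ 2
  rw [pow_two]
  exact Submodule.mul_mem_mul (LinearMap.mem_range_self _ x) (LinearMap.mem_range_self _ y)

@[elab_as_elim]
theorem induction_on_two {P : ExteriorAlgebra R M → Prop}
    (ι_mul_ι : ∀ x y : M, P (ι R x * ι R y)) (add : ∀ z w, P z → P w → P (z + w))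
    {z : ExteriorAlgebra R M} (hz : z ∈ ⋀[R]^2 M) : P z := by
  change _ ∈ LinearMap.range (ι R : M →ₗ[R] _) ^ 2 at hz
  rw [pow_two] at hz
  refine Submodule.mul_induction_on hz ?_ add
  rintro _ ⟨x, rfl⟩ _ ⟨y, rfl⟩
  exact ι_mul_ι x y

theorem ι_mul_comm_of_mem_two (x : M) {z : ExteriorAlgebra R M} (hz : z ∈ ⋀[R]^2 M) :
    ι R x * z = z * ι R x := by
  refine induction_on_two (fun a b => ?_) (fun z w hz hw => ?_) hz
  · rw [← mul_assoc, ι_mul_ι_comm x a, neg_mul, mul_assoc, ι_mul_ι_comm x b, mul_neg, neg_neg,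
      mul_assoc]
  · rw [mul_add, add_mul, hz, hw]

theorem mul_comm_of_mem_two {z w : ExteriorAlgebra R M} (hz : z ∈ ⋀[R]^2 M)
    (hw : w ∈ ⋀[R]^2 M) : z * w = w * z := by
  refine induction_on_two (fun a b => ?_) (fun z z' hz hz' => ?_) hz
  · rw [mul_assoc, ι_mul_comm_of_mem_two b hw, ← mul_assoc, ι_mul_comm_of_mem_two a hw, mul_assoc]
  · rw [mul_add, add_mul, hz, hz']

theorem ι_mul_ι_mul_ι_mul_ι_self₁₃ (x y w : M) : ι R x * ι R y * (ι R x * ι R w) = 0 := by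
  rw [← mul_assoc, ← ι_mul_comm_of_mem_two x (ι_mul_ι_mem x y), ← mul_assoc, ι_sq_zero,
    zero_mul, zero_mul]

theorem ι_mul_ι_mul_ι_mul_ι_self₁₄ (x y w : M) :
    ι R x * ι R y * (ι R w * ι R x) = 0 := by
  rw [ι_mul_ι_comm w, mul_neg, ι_mul_ι_mul_ι_mul_ι_self₁₃, neg_zero]

theorem ι_mul_ι_mul_ι_mul_ι_self₂₄ (x y w : M) :
    ι R x * ι R y * (ι R w * ι R y) = 0 := by
  rw [ι_mul_ι_comm x, neg_mul, ι_mul_ι_mul_ι_mul_ι_self₁₄, neg_zero]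

theorem ι_mul_ι_mul_ι_mul_ι_swap₁₄ (a b c e : M) :
    ι R a * ι R b * (ι R c * ι R e) = -(ι R e * ι R b * (ι R c * ι R a)) := by
  rw [mul_comm_of_mem_two (ι_mul_ι_mem e b) (ι_mul_ι_mem c a), ι_mul_ι_comm c a, neg_mul,
    neg_neg, mul_assoc (ι R a) (ι R b), ι_mul_comm_of_mem_two b (ι_mul_ι_mem c e)]
  noncomm_ring

theorem contractLeft_ι_mul_ι (d : Module.Dual R M) (x y : M) :
    d ⌋ (ι R x * ι R y) = d x • ι R y - d y • ι R x := by
  rw [CliffordAlgebra.contractLeft_ι_mul, CliffordAlgebra.contractLeft_ι, ← Algebra.commutes,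
    ← Algebra.smul_def]

theorem contractLeft_mul_of_mem_two (d : Module.Dual R M) {z : ExteriorAlgebra R M}
    (hz : z ∈ ⋀[R]^2 M) (w : ExteriorAlgebra R M) : d ⌋ (z * w) = d ⌋ z * w + z * (d ⌋ w) := by
  refine induction_on_two (fun a b => ?_) (fun z z' hz hz' => ?_) hz
  · rw [mul_assoc, CliffordAlgebra.contractLeft_ι_mul, CliffordAlgebra.contractLeft_ι_mul,
      contractLeft_ι_mul_ι]
    simp only [mul_sub, sub_mul, smul_mul_assoc, mul_smul_comm, mul_assoc]
    abel
  · simp only [add_mul, map_add, hz, hz']; abel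

-- Meant for `q ∈ ⋀²M`, where `d ⌋ q` has degree one (`ι_contractVec`).
noncomputable def contractVec : ExteriorAlgebra R M →ₗ[R] Module.Dual R M →ₗ[R] M :=
  (CliffordAlgebra.contractLeft (Q := (0 : QuadraticForm R M))).flip.compr₂ ιInv

theorem contractVec_ι_mul_ι (x y : M) (d : Module.Dual R M) :
    contractVec (ι R x * ι R y) d = d x • y - d y • x := by
  simp [contractVec, contractLeft_ι_mul_ι, ι_leftInverse _]

theorem ι_contractVec {q : ExteriorAlgebra R M} (hq : q ∈ ⋀[R]^2 M) (d : Module.Dual R M) :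
    ι R (contractVec q d) = d ⌋ q := by
  refine induction_on_two (fun x y => ?_) (fun z w hz hw => ?_) hq
  · rw [contractVec_ι_mul_ι, contractLeft_ι_mul_ι, map_sub, map_smul, map_smul]
  · rw [map_add, LinearMap.add_apply, map_add, hz, hw, map_add]

theorem apply_contractVec_comm {q : ExteriorAlgebra R M} (hq : q ∈ ⋀[R]^2 M)
    (d d' : Module.Dual R M) : d' (contractVec q d) = -d (contractVec q d') := by
  apply algebraMap_leftInverse (R := R) M |>.injective
  rw [map_neg, ← CliffordAlgebra.contractLeft_ι, ← CliffordAlgebra.contractLeft_ι,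
    ι_contractVec hq, ι_contractVec hq, CliffordAlgebra.contractLeft_comm]

theorem sum_ι_mul_ι_contractVec {κ : Type*} [Fintype κ] (e : Module.Basis κ R M)
    {q : ExteriorAlgebra R M} (hq : q ∈ ⋀[R]^2 M) :
    ∑ i, ι R (e i) * ι R (contractVec q (e.coord i)) = (2 : R) • q := by
  have sum_coord_smul (x : M) : ∑ i, e.coord i x • ι R (e i) = ι R x := by
    simp_rw [← map_smul, ← map_sum, Module.Basis.coord_apply, e.sum_repr]
  refine induction_on_two (fun x y => ?_) (fun z w hz hw => ?_) hq
  · simp only [contractVec_ι_mul_ι, map_sub, map_smul, mul_sub, mul_smul_comm,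
      Finset.sum_sub_distrib, ← Finset.sum_mul, ← smul_mul_assoc, sum_coord_smul]
    rw [ι_mul_ι_comm y x, smul_mul_assoc, two_smul, sub_neg_eq_add]
  · simp only [map_add, LinearMap.add_apply, mul_add, Finset.sum_add_distrib, hz, hw, smul_add]

theorem ι_mul_ι_ne_zero {x y : M} (d : Module.Dual R M) (hx : d x = 1) (hy : d y = 0)
    (hy0 : y ≠ 0) : ι R x * ι R y ≠ 0 := by
  intro h
  have := congrArg (contractVec · d) h
  simp only [contractVec_ι_mul_ι, hx, hy, one_smul, zero_smul, sub_zero, map_zero,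
    LinearMap.zero_apply] at this
  exact hy0 this

end CommRing

section Field

variable {K V : Type*} [Field K] [AddCommGroup V] [Module K V]

theorem exists_eq_ι_mul_ι_of_ι_mul_eq_zero {x : V} (hx : x ≠ 0) {z : ExteriorAlgebra K V}
    (hz : z ∈ ⋀[K]^2 V) (h : ι K x * z = 0) : ∃ y, z = ι K x * ι K y := by
  obtain ⟨g, hg⟩ := Module.Projective.exists_dual_eq_one K hx
  refine ⟨contractVec z g, ?_⟩
  have := CliffordAlgebra.contractLeft_ι_mul (Q := 0) g x z
  rw [h, map_zero, hg, one_smul, ← ι_contractVec hz] at this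
  exact sub_eq_zero.mp this.symm

variable [NeZero (2 : K)]

theorem exists_contractVec_ne_zero [FiniteDimensional K V] {q : ExteriorAlgebra K V}
    (hq : q ∈ ⋀[K]^2 V) (hq0 : q ≠ 0) : ∃ d, contractVec q d ≠ 0 := by
  by_contra! h
  have := sum_ι_mul_ι_contractVec (Module.finBasis K V) hq
  simp only [h, map_zero, mul_zero, Finset.sum_const_zero] at this
  exact hq0 ((smul_eq_zero.mp this.symm).resolve_left two_ne_zero)

theorem exists_eq_ι_mul_ι_of_mul_self_eq_zero [FiniteDimensional K V] {z : ExteriorAlgebra K V}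
    (hz : z ∈ ⋀[K]^2 V) (hzz : z * z = 0) : ∃ x y, z = ι K x * ι K y := by
  rcases eq_or_ne z 0 with rfl | hz0
  · exact ⟨0, 0, by simp⟩
  obtain ⟨d, hd⟩ := exists_contractVec_ne_zero hz hz0
  have h2 : (2 : K) • (ι K (contractVec z d) * z) = 0 := by
    have := contractLeft_mul_of_mem_two d hz z
    rw [hzz, map_zero, ← ι_contractVec hz, ← ι_mul_comm_of_mem_two _ hz] at this
    rw [two_smul, ← this]
  obtain ⟨y, hy⟩ := exists_eq_ι_mul_ι_of_ι_mul_eq_zero hd hz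
    ((smul_eq_zero.mp h2).resolve_left two_ne_zero)
  exact ⟨_, _, hy⟩

theorem exists_eq_sum_of_contractVec_coord_zero (f : Module.Basis (Fin 5) K V)
    {q : ExteriorAlgebra K V} (hq : q ∈ ⋀[K]^2 V) (h0 : contractVec q (f.coord 0) = 0) :
    ∃ c : Fin 5 → Fin 5 → K, q = c 1 2 • (ι K (f 1) * ι K (f 2)) + c 1 3 • (ι K (f 1) * ι K (f 3))
      + c 1 4 • (ι K (f 1) * ι K (f 4)) + c 2 3 • (ι K (f 2) * ι K (f 3))
      + c 2 4 • (ι K (f 2) * ι K (f 4)) + c 3 4 • (ι K (f 3) * ι K (f 4)) := by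
  set c : Fin 5 → Fin 5 → K := fun i j => f.coord j (contractVec q (f.coord i)) with hc
  have c_comm (i j : Fin 5) : c j i = -c i j := apply_contractVec_comm hq _ _
  have c_zero (i : Fin 5) : c i 0 = 0 := by rw [← neg_eq_zero, ← c_comm, hc]; simp [h0]
  have hcontract (i : Fin 5) : contractVec q (f.coord i) = ∑ j, c i j • f j :=
    (f.sum_repr _).symm
  have h2q := sum_ι_mul_ι_contractVec f hq
  rw [Fin.sum_univ_five, h0] at h2q
  simp only [hcontract, Fin.sum_univ_five, map_add, map_smul, mul_add, mul_smul_comm, c_zero,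
    ι_sq_zero, smul_zero, zero_smul, map_zero, mul_zero, zero_add, add_zero] at h2q
  rw [ι_mul_ι_comm (f 2) (f 1), ι_mul_ι_comm (f 3) (f 1), ι_mul_ι_comm (f 4) (f 1),
    ι_mul_ι_comm (f 3) (f 2), ι_mul_ι_comm (f 4) (f 2), ι_mul_ι_comm (f 4) (f 3),
    c_comm 1 2, c_comm 1 3, c_comm 1 4, c_comm 2 3, c_comm 2 4, c_comm 3 4] at h2q
  refine ⟨c, smul_right_injective _ (two_ne_zero (α := K)) ?_⟩
  dsimp only
  rw [← h2q]
  module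

theorem exists_ι_mul_ι_ne_zero_mul_eq_zero_of_contractVec_coord_zero
    (f : Module.Basis (Fin 5) K V) {q : ExteriorAlgebra K V} (hq : q ∈ ⋀[K]^2 V)
    (h0 : contractVec q (f.coord 0) = 0) :
    ∃ x y, ι K x * ι K y ≠ 0 ∧ q * (ι K x * ι K y) = 0 := by
  obtain ⟨c, hq6⟩ := exists_eq_sum_of_contractVec_coord_zero f hq h0
  -- Modulo `f 1`, `q` lies in `⋀²` of the span of `f 2, f 3, f 4`, and there it is annihilated
  -- by `c 2 4 • f 2 + c 3 4 • f 3`.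
  by_cases h34 : c 3 4 = 0
  · refine ⟨f 1, f 2, ι_mul_ι_ne_zero (f.coord 1) (by simp) (by simp) (f.ne_zero 2), ?_⟩
    rw [hq6, h34]
    simp only [add_mul, smul_mul_assoc, zero_smul, ι_mul_ι_mul_ι_mul_ι_self₁₃,
      ι_mul_ι_mul_ι_mul_ι_self₁₄, smul_zero, add_zero]
  · have hy0 : c 2 4 • f 2 + c 3 4 • f 3 ≠ 0 := fun h => h34 <| by
      simpa using congrArg (f.coord 3) h
    refine ⟨f 1, _, ι_mul_ι_ne_zero (f.coord 1) (by simp) (by simp) hy0, ?_⟩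
    rw [hq6]
    simp only [map_add, map_smul, mul_add, mul_smul_comm, add_mul, smul_mul_assoc,
      ι_mul_ι_mul_ι_mul_ι_self₁₃, ι_mul_ι_mul_ι_mul_ι_self₁₄,
      ι_mul_ι_mul_ι_mul_ι_self₂₄, smul_zero, add_zero, zero_add,
      ι_mul_ι_mul_ι_mul_ι_swap₁₄ (f 2) (f 4) (f 1) (f 3)]
    module

theorem exists_ι_mul_ι_ne_zero_mul_eq_zero [FiniteDimensional K V] (hV : Module.finrank K V = 5)
    {q : ExteriorAlgebra K V} (hq : q ∈ ⋀[K]^2 V) :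
    ∃ x y, ι K x * ι K y ≠ 0 ∧ q * (ι K x * ι K y) = 0 := by
  obtain ⟨d, hd0, hd⟩ := LinearMap.exists_ne_zero_apply_eq_zero_of_skew (by rw [hV]; decide)
    (contractVec q) (apply_contractVec_comm hq)
  obtain ⟨f, rfl⟩ := Module.Basis.exists_coord_zero_eq hV hd0
  exact exists_ι_mul_ι_ne_zero_mul_eq_zero_of_contractVec_coord_zero f hq hd

end Field

end ExteriorAlgebra

/-- Let `W` be a 5-dimensional complex vector space and `K_{[p]} = {q | q ∧ p = 0}` the
fiber of the kernel of `∧²W ⊗ O → ∧²Q` at a point `[p]` of `G(2, W)` (i.e. at a nonzero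
decomposable `p = x₁ ∧ x₂`).  The image `Σ ⊂ ℙ(∧²W ⊕ ∧²W)` of
`ℙ_{G(2,W)}(K ⊕ O(-1))` — the set of points `[(q, t·p)]` with `[p] ∈ G(2, W)`, `q ∧ p = 0`,
`t ∈ ℂ` — coincides, as a set (i.e. with the reduced structure), with
`{[q, p] | p ∧ p = 0 and q ∧ p = 0 in ∧⁴W}`. -/
theorem sigma_eq_wedge_locus (W : Type*) [AddCommGroup W] [Module ℂ W]
    [FiniteDimensional ℂ W] (hW : Module.finrank ℂ W = 5) :
    {y : ℙ ℂ ((⋀[ℂ]^2 W) × (⋀[ℂ]^2 W)) |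
        ∃ (q p : ⋀[ℂ]^2 W) (t : ℂ) (x₁ x₂ : W) (h : (q, t • p) ≠ 0),
          (p : ExteriorAlgebra ℂ W) = ι ℂ x₁ * ι ℂ x₂ ∧ p ≠ 0 ∧
          (q : ExteriorAlgebra ℂ W) * (p : ExteriorAlgebra ℂ W) = 0 ∧
          y = Projectivization.mk ℂ (q, t • p) h}
      = {y : ℙ ℂ ((⋀[ℂ]^2 W) × (⋀[ℂ]^2 W)) |
          (y.rep.2 : ExteriorAlgebra ℂ W) * (y.rep.2 : ExteriorAlgebra ℂ W) = 0 ∧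
          (y.rep.1 : ExteriorAlgebra ℂ W) * (y.rep.2 : ExteriorAlgebra ℂ W) = 0} := by
  ext y
  constructor
  · rintro ⟨q, p, t, x₁, x₂, h, hp, -, hqp, rfl⟩
    obtain ⟨a, ha⟩ := Projectivization.exists_smul_eq_mk_rep ℂ (q, t • p) h
    have hpp : (p : ExteriorAlgebra ℂ W) * p = 0 := hp ▸ ι_mul_ι_mul_ι_mul_ι_self₁₃ _ _ _
    simp only [Set.mem_ofPred_eq, ← ha, Prod.smul_mk, Units.smul_def, SetLike.val_smul,
      mul_smul_comm, smul_mul_assoc, hpp, hqp, smul_zero, and_self]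
  · rintro ⟨hpp, hqp⟩
    rcases eq_or_ne y.rep.2 0 with hp0 | hp0
    · obtain ⟨x₁, x₂, hne, hann⟩ := exists_ι_mul_ι_ne_zero_mul_eq_zero hW y.rep.1.2
      refine ⟨y.rep.1, ⟨_, ι_mul_ι_mem x₁ x₂⟩, 0, x₁, x₂, ?_, rfl, ?_, hann, ?_⟩
      · simpa [← hp0] using y.rep_nonzero
      · exact fun h => hne (congrArg Subtype.val h)
      · conv_lhs => rw [← y.mk_rep]
        congr
        ext <;> simp [hp0]
    · obtain ⟨x₁, x₂, hp⟩ := exists_eq_ι_mul_ι_of_mul_self_eq_zero y.rep.2.2 hpp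
      refine ⟨y.rep.1, y.rep.2, 1, x₁, x₂, by simpa using y.rep_nonzero, hp, hp0, hqp, ?_⟩
      conv_lhs => rw [← y.mk_rep]
      congr
      simp
end

section
/- Let d > 0 be an integer and suppose k > d + 2 and k > 3 + √(9 + 2d). Suppose non-negative integers α, β, γ, δ satisfy both (α+β+2γ+2δ-2)k² + (-α+β-4γ)k ≤ 2d and (2-α-β)k² + (-4+3α+β)k + 2(-α+β-γ+δ) ≤ 2d. Then (α, β, γ, δ) = (1,1,0,0) or (0,2,0,0). -/
set_option maxHeartbeats 2000000 in
/-- In the finiteness proof for complete intersection Calabi–Yau `d`-folds: if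
`k > d + 2`, `k > 3 + √(9 + 2d)`, and the non-negative integers `α, β, γ, δ` satisfy
`(α+β+2γ+2δ-2)k² + (-α+β-4γ)k ≤ 2d` and
`(2-α-β)k² + (-4+3α+β)k + 2(-α+β-γ+δ) ≤ 2d`, then
`(α, β, γ, δ) = (1,1,0,0)` or `(0,2,0,0)`. -/
theorem abcd_restriction (d k : ℕ) (hd : 0 < d) (hk1 : (d : ℝ) + 2 < k)
    (hk2 : 3 + Real.sqrt (9 + 2 * d) < (k : ℝ)) (α β γ δ : ℕ)
    (h1 : ((α : ℤ) + β + 2 * γ + 2 * δ - 2) * k ^ 2 + (-(α : ℤ) + β - 4 * γ) * k ≤ 2 * d)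
    (h2 : (2 - (α : ℤ) - β) * k ^ 2 + (-4 + 3 * (α : ℤ) + β) * k
        + 2 * (-(α : ℤ) + β - γ + δ) ≤ 2 * d) :
    (α, β, γ, δ) = (1, 1, 0, 0) ∨ (α, β, γ, δ) = (0, 2, 0, 0) := by
  have hs9 : Real.sqrt (9 + 2 * d) ^ 2 = 9 + 2 * (d : ℝ) :=
    Real.sq_sqrt (by positivity)
  have hkkR : 2 * (d : ℝ) < (k : ℝ) ^ 2 - 6 * k := by
    nlinarith [Real.sqrt_nonneg (9 + 2 * (d : ℝ))]
  have hkk : 2 * (d : ℤ) < (k : ℤ) ^ 2 - 6 * k := by exact_mod_cast hkkR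
  have hk1' : (d : ℤ) + 2 < (k : ℤ) := by exact_mod_cast hk1
  have hd' : (1 : ℤ) ≤ d := by exact_mod_cast hd
  have hk4 : (4 : ℤ) ≤ (k : ℤ) := by linarith
  have hs : α + β + 2 * γ + 2 * δ ≤ 2 := by
    by_contra hcon
    push_neg at hcon
    have hcon' : (3 : ℤ) ≤ (α : ℤ) + β + 2 * γ + 2 * δ := by exact_mod_cast hcon
    have ha : (0 : ℤ) ≤ (α : ℤ) := Int.ofNat_nonneg α
    have hb : (0 : ℤ) ≤ (β : ℤ) := Int.ofNat_nonneg β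
    have hg : (0 : ℤ) ≤ (γ : ℤ) := Int.ofNat_nonneg γ
    have hdl : (0 : ℤ) ≤ (δ : ℤ) := Int.ofNat_nonneg δ
    have hk0 : (0:ℤ) ≤ (k:ℤ) := by linarith
    nlinarith [mul_nonneg (mul_nonneg ha hk0) hk0,
      mul_nonneg (mul_nonneg hg hk0) hk0,
      mul_nonneg (mul_nonneg hdl hk0) hk0,
      mul_nonneg (mul_nonneg hb hk0) hk0,
      mul_nonneg ha hk0, mul_nonneg hg hk0,
      mul_nonneg hb hk0, mul_nonneg hdl hk0,
      sq_nonneg ((k:ℤ) - 2)]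
    -- want: (s-2)k^2 - (α+4γ)k ≤ 2d < k^2-6k contradiction
  have hα : α ≤ 2 := by omega
  have hβ : β ≤ 2 := by omega
  have hγ : γ ≤ 1 := by omega
  have hδ : δ ≤ 1 := by omega
  clear hkkR hs9 hk1 hk2 hd
  interval_cases α <;> interval_cases β <;> interval_cases γ <;> interval_cases δ <;>
    norm_num at h1 h2 ⊢ <;> nlinarith [hkk, hk1', hk4, sq_nonneg ((k:ℤ) - 1)]
end
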